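/- Let ς = (ς₁, ς₂) ∈ {(1,0), (0,1)}. Let m, n, a, b, c be natural numbers with a ≥ 1, a ≥ c, m ≥ c, n−b+c ≥ 0, b ≥ a+c, and α := m−n+b−2c+ς₂ ≥ 1. Then for all k, y ∈ ℕ with k+y = c, the summand ω^(a,b,c)_{m,n,k,y,ς} is a nonzero element of ℚ(q); moreover, if b > a+c then deg(ω^(a,b,c)_{m,n,k,y,ς}) < 0, and if b = a+c then deg(ω^(a,b,c)_{m,n,k,y,ς}) ≤ 0. -/
import Mathlib

open scoped BigOperators

/-- The generator `q` of the field of rational functions `ℚ(q)`. -/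
noncomputable def q : RatFunc ℚ := RatFunc.X

/-- The balanced quantum integer `[a] = (q^a - q^(-a))/(q - q⁻¹)`. -/
noncomputable def qint (a : ℤ) : RatFunc ℚ := (q ^ a - q ^ (-a)) / (q - q⁻¹)

/-- The quantum factorial `[k]! = [1][2]⋯[k]`. -/
noncomputable def qfact (k : ℕ) : RatFunc ℚ := ∏ i ∈ Finset.range k, qint ((i : ℤ) + 1)

/-- The balanced quantum binomial `qbinom a b = [a][a-1]⋯[a-b+1]/[b]!` for `b ≥ 0`,
and `0` for `b < 0`. -/
noncomputable def qbinom (a b : ℤ) : RatFunc ℚ :=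
  if b < 0 then 0
  else (∏ i ∈ Finset.range b.toNat, qint (a - (i : ℤ))) / qfact b.toNat

/-- The product `[α][α+2]⋯[α+2k−2]` of `k` balanced quantum integers. -/
noncomputable def prodQint (α : ℤ) (k : ℕ) : RatFunc ℚ :=
  ∏ i ∈ Finset.range k, qint (α + 2 * (i : ℤ))

/-- The summand `ω^(a,b,c)_{m,n,k,y,ς}` of `Ω^{a,b,c}_{m,n,ς}` (for `k + y = c`):
`(−1)^k·([α][α+2]⋯[α+2k−2]/[k]!)·q^(ς₂(y−a))·
q^(−y(y+1+2n+2c−2b)/2 − a(−1+2m+2b−4c−a−2y+2k)/2)·qbinom(n−b+c+a, a)·qbinom(m, y)`,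
where `α = m − n + b − 2c + ς₂`. -/
noncomputable def omegaS (ς : ℤ × ℤ) (m n a b c : ℤ) (k y : ℕ) : RatFunc ℚ :=
  (-1 : RatFunc ℚ) ^ k * (prodQint (m - n + b - 2 * c + ς.2) k / qfact k) *
    q ^ (ς.2 * ((y : ℤ) - a)) *
    q ^ ((-((y : ℤ) * ((y : ℤ) + 1 + 2 * n + 2 * c - 2 * b)) -
          a * (-1 + 2 * m + 2 * b - 4 * c - a - 2 * (y : ℤ) + 2 * (k : ℤ))) / 2) *
    qbinom (n - b + c + a) a * qbinom m (y : ℤ)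

section Aux

lemma q_def : q = RatFunc.X := rfl

lemma q_ne : q ≠ 0 := RatFunc.X_ne_zero

lemma intDegree_pow (f : RatFunc ℚ) (hf : f ≠ 0) (n : ℕ) :
    (f ^ n).intDegree = n * f.intDegree := by
  induction n with
  | zero => simp [RatFunc.intDegree_one]
  | succ n ih =>
      rw [pow_succ, RatFunc.intDegree_mul (pow_ne_zero _ hf) hf, ih]
      push_cast; ring

lemma intDegree_inv (f : RatFunc ℚ) (hf : f ≠ 0) : f⁻¹.intDegree = -f.intDegree := by
  have h := RatFunc.intDegree_mul hf (inv_ne_zero hf)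
  rw [mul_inv_cancel₀ hf, RatFunc.intDegree_one] at h
  linarith

lemma intDegree_div (f g : RatFunc ℚ) (hf : f ≠ 0) (hg : g ≠ 0) :
    (f / g).intDegree = f.intDegree - g.intDegree := by
  rw [div_eq_mul_inv, RatFunc.intDegree_mul hf (inv_ne_zero hg), intDegree_inv _ hg]
  ring

lemma intDegree_qzpow (z : ℤ) : (q ^ z).intDegree = z := by
  cases z with
  | ofNat n =>
      rw [Int.ofNat_eq_coe, zpow_natCast, intDegree_pow _ q_ne, q_def, RatFunc.intDegree_X]
      ring
  | negSucc n =>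
      rw [zpow_negSucc, intDegree_inv _ (pow_ne_zero _ q_ne), intDegree_pow _ q_ne, q_def,
        RatFunc.intDegree_X]
      simp [Int.negSucc_eq]

noncomputable def auxA (w : ℕ) : RatFunc ℚ :=
  algebraMap (Polynomial ℚ) (RatFunc ℚ) (Polynomial.X ^ w - 1)

lemma auxA_ne (w : ℕ) (hw : 0 < w) : auxA w ≠ 0 := by
  apply RatFunc.algebraMap_ne_zero
  intro h
  have h2 : (Polynomial.X ^ w - 1 : Polynomial ℚ).natDegree = w := by
    rw [← Polynomial.C_1, Polynomial.natDegree_X_pow_sub_C]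
  rw [h, Polynomial.natDegree_zero] at h2
  omega

lemma auxA_deg (w : ℕ) : (auxA w).intDegree = w := by
  rw [auxA, RatFunc.intDegree_polynomial, ← Polynomial.C_1, Polynomial.natDegree_X_pow_sub_C]

lemma aux_key (z : ℤ) (hz : 1 ≤ z) :
    q ^ z - q ^ (-z) = q ^ (-z) * auxA (2 * z).toNat := by
  rw [auxA, map_sub, map_pow, RatFunc.algebraMap_X, map_one, mul_sub, mul_one, ← q_def,
    ← zpow_natCast q ((2 * z).toNat), ← zpow_add₀ q_ne]
  congr 2
  omega

lemma qint_spec (z : ℤ) (hz : 1 ≤ z) : qint z ≠ 0 ∧ (qint z).intDegree = z - 1 := by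
  have hden : q - q⁻¹ = q ^ (-(1:ℤ)) * auxA 2 := by
    have h1 : q - q⁻¹ = q ^ (1:ℤ) - q ^ (-(1:ℤ)) := by
      rw [zpow_one, zpow_neg, zpow_one]
    rw [h1, aux_key 1 le_rfl]
    congr 2
  have hnum := aux_key z hz
  have hAz : auxA (2 * z).toNat ≠ 0 := auxA_ne _ (by omega)
  have hA2 : auxA 2 ≠ 0 := auxA_ne _ (by omega)
  have hne1 : q ^ (-z) * auxA (2 * z).toNat ≠ 0 := mul_ne_zero (zpow_ne_zero _ q_ne) hAz
  have hne2 : q ^ (-(1:ℤ)) * auxA 2 ≠ 0 := mul_ne_zero (zpow_ne_zero _ q_ne) hA2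
  constructor
  · rw [qint, hnum, hden]
    exact div_ne_zero hne1 hne2
  · rw [qint, hnum, hden, intDegree_div _ _ hne1 hne2,
      RatFunc.intDegree_mul (zpow_ne_zero _ q_ne) hAz,
      RatFunc.intDegree_mul (zpow_ne_zero _ q_ne) hA2,
      intDegree_qzpow, intDegree_qzpow, auxA_deg, auxA_deg]
    omega

lemma qfact_spec (k : ℕ) : qfact k ≠ 0 ∧ 2 * (qfact k).intDegree = k * (k - 1) := by
  induction k with
  | zero => simp [qfact, RatFunc.intDegree_one]
  | succ k ih =>
      obtain ⟨h1, h2⟩ := ih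
      obtain ⟨h3, h4⟩ := qint_spec ((k : ℤ) + 1) (by omega)
      have hp : qfact (k+1) = qfact k * qint ((k : ℤ) + 1) := Finset.prod_range_succ _ _
      refine ⟨by rw [hp]; exact mul_ne_zero h1 h3, ?_⟩
      rw [hp, RatFunc.intDegree_mul h1 h3, h4]
      push_cast
      linear_combination h2

lemma prodQint_spec (α : ℤ) (hα : 1 ≤ α) (k : ℕ) :
    prodQint α k ≠ 0 ∧
      2 * (prodQint α k).intDegree = 2 * k * α + 2 * k * (k - 1) - 2 * k := by
  induction k with
  | zero => simp [prodQint, RatFunc.intDegree_one]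
  | succ k ih =>
      obtain ⟨h1, h2⟩ := ih
      obtain ⟨h3, h4⟩ := qint_spec (α + 2 * k) (by omega)
      have hp : prodQint α (k+1) = prodQint α k * qint (α + 2 * k) :=
        Finset.prod_range_succ _ _
      refine ⟨by rw [hp]; exact mul_ne_zero h1 h3, ?_⟩
      rw [hp, RatFunc.intDegree_mul h1 h3, h4]
      push_cast
      linear_combination h2

lemma desc_spec (A : ℤ) (B : ℕ) (hAB : (B : ℤ) ≤ A) :
    (∏ i ∈ Finset.range B, qint (A - (i : ℤ))) ≠ 0 ∧
      2 * (∏ i ∈ Finset.range B, qint (A - (i : ℤ))).intDegree =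
        2 * B * A - B * (B - 1) - 2 * B := by
  induction B with
  | zero => simp [RatFunc.intDegree_one]
  | succ B ih =>
      obtain ⟨h1, h2⟩ := ih (by omega)
      obtain ⟨h3, h4⟩ := qint_spec (A - B) (by omega)
      rw [Finset.prod_range_succ]
      refine ⟨mul_ne_zero h1 h3, ?_⟩
      rw [RatFunc.intDegree_mul h1 h3, h4]
      push_cast
      linear_combination h2

lemma qbinom_spec (A : ℤ) (B : ℕ) (hAB : (B : ℤ) ≤ A) :
    qbinom A B ≠ 0 ∧ 2 * (qbinom A B).intDegree = 2 * B * (A - B) := by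
  obtain ⟨h1, h2⟩ := desc_spec A B hAB
  obtain ⟨h3, h4⟩ := qfact_spec B
  have hq : qbinom A B =
      (∏ i ∈ Finset.range B, qint (A - (i : ℤ))) / qfact B := by
    rw [qbinom, if_neg (by omega)]
    norm_num
  refine ⟨by rw [hq]; exact div_ne_zero h1 h3, ?_⟩
  rw [hq, intDegree_div _ _ h1 h3]
  linear_combination h2 - h4

end Aux

/-- Lemma 5.2 of the paper: with `a ≥ 1`, `a ≥ c`, the summands `ω^(a,b,c)_{m,n,k,y,ς}` are
nonzero, of negative degree when `b > a + c` and of nonpositive degree when `b = a + c`. -/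
theorem omegaS_intDegree (ς : ℤ × ℤ) (hς : ς = (1, 0) ∨ ς = (0, 1)) (m n a b c : ℕ)
    (ha : 1 ≤ a) (hca : c ≤ a) (hm : c ≤ m)
    (hn : 0 ≤ (n : ℤ) - (b : ℤ) + (c : ℤ)) (hb : a + c ≤ b)
    (hα : 1 ≤ (m : ℤ) - (n : ℤ) + (b : ℤ) - 2 * (c : ℤ) + ς.2) :
    ∀ k y : ℕ, k + y = c →
      omegaS ς (m : ℤ) (n : ℤ) (a : ℤ) (b : ℤ) (c : ℤ) k y ≠ 0 ∧
      (a + c < b → (omegaS ς (m : ℤ) (n : ℤ) (a : ℤ) (b : ℤ) (c : ℤ) k y).intDegree < 0) ∧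
      (b = a + c → (omegaS ς (m : ℤ) (n : ℤ) (a : ℤ) (b : ℤ) (c : ℤ) k y).intDegree ≤ 0) := by
  intro k y hky
  obtain ⟨hP1, hP2⟩ := prodQint_spec ((m : ℤ) - n + b - 2 * c + ς.2) hα k
  obtain ⟨hQ1, hQ2⟩ := qfact_spec k
  obtain ⟨hB1, hB2⟩ := qbinom_spec ((n : ℤ) - b + c + a) a (by omega)
  obtain ⟨hC1, hC2⟩ := qbinom_spec (m : ℤ) y (by omega)
  have hne_neg : (-1 : RatFunc ℚ) ≠ 0 := by norm_num
  have hne1 : ((-1 : RatFunc ℚ)) ^ k ≠ 0 := pow_ne_zero _ hne_neg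
  have hdeg1 : (((-1 : RatFunc ℚ)) ^ k).intDegree = 0 := by
    rw [intDegree_pow _ hne_neg, show (-1 : RatFunc ℚ) = -(1 : RatFunc ℚ) from rfl,
      RatFunc.intDegree_neg, RatFunc.intDegree_one, mul_zero]
  have hne2 : prodQint ((m : ℤ) - n + b - 2 * c + ς.2) k / qfact k ≠ 0 :=
    div_ne_zero hP1 hQ1
  have hdeg2 := intDegree_div _ _ hP1 hQ1
  -- the second power-of-q exponent
  obtain ⟨u, hu⟩ := Int.even_mul_succ_self (y : ℤ)
  obtain ⟨v, hv⟩ := Int.even_mul_succ_self (a : ℤ)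
  have hNM : (-((y : ℤ) * ((y : ℤ) + 1 + 2 * n + 2 * c - 2 * b)) -
      a * (-1 + 2 * m + 2 * b - 4 * c - a - 2 * (y : ℤ) + 2 * (k : ℤ))) =
      2 * (-u - (y : ℤ) * ((n : ℤ) + c - b) + v -
        (a : ℤ) * ((m : ℤ) + b - 2 * c - (y : ℤ) + (k : ℤ))) := by
    linear_combination hv - hu
  have hz2 : ((-((y : ℤ) * ((y : ℤ) + 1 + 2 * n + 2 * c - 2 * b)) -
      a * (-1 + 2 * m + 2 * b - 4 * c - a - 2 * (y : ℤ) + 2 * (k : ℤ))) / 2) =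
      (-u - (y : ℤ) * ((n : ℤ) + c - b) + v -
        (a : ℤ) * ((m : ℤ) + b - 2 * c - (y : ℤ) + (k : ℤ))) := by
    rw [hNM]
    exact Int.mul_ediv_cancel_left _ two_ne_zero
  have hne3 : q ^ (ς.2 * ((y : ℤ) - a)) ≠ 0 := zpow_ne_zero _ q_ne
  have hne4 : q ^ ((-((y : ℤ) * ((y : ℤ) + 1 + 2 * n + 2 * c - 2 * b)) -
      a * (-1 + 2 * m + 2 * b - 4 * c - a - 2 * (y : ℤ) + 2 * (k : ℤ))) / 2) ≠ 0 :=
    zpow_ne_zero _ q_ne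
  have hne : omegaS ς (m : ℤ) (n : ℤ) (a : ℤ) (b : ℤ) (c : ℤ) k y ≠ 0 := by
    rw [omegaS]
    exact mul_ne_zero (mul_ne_zero (mul_ne_zero (mul_ne_zero (mul_ne_zero hne1 hne2)
      hne3) hne4) hB1) hC1
  have hdeg : (omegaS ς (m : ℤ) (n : ℤ) (a : ℤ) (b : ℤ) (c : ℤ) k y).intDegree =
      (((-1 : RatFunc ℚ)) ^ k).intDegree +
      ((prodQint ((m : ℤ) - n + b - 2 * c + ς.2) k).intDegree - (qfact k).intDegree) +
      (ς.2 * ((y : ℤ) - a)) +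
      (-u - (y : ℤ) * ((n : ℤ) + c - b) + v -
        (a : ℤ) * ((m : ℤ) + b - 2 * c - (y : ℤ) + (k : ℤ))) +
      (qbinom ((n : ℤ) - b + c + a) a).intDegree + (qbinom (m : ℤ) (y : ℤ)).intDegree := by
    rw [omegaS,
      RatFunc.intDegree_mul (mul_ne_zero (mul_ne_zero (mul_ne_zero (mul_ne_zero hne1 hne2)
        hne3) hne4) hB1) hC1,
      RatFunc.intDegree_mul (mul_ne_zero (mul_ne_zero (mul_ne_zero hne1 hne2) hne3) hne4) hB1,
      RatFunc.intDegree_mul (mul_ne_zero (mul_ne_zero hne1 hne2) hne3) hne4,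
      RatFunc.intDegree_mul (mul_ne_zero hne1 hne2) hne3,
      RatFunc.intDegree_mul hne1 hne2, hdeg2, intDegree_qzpow, intDegree_qzpow, hz2]
  have hkc : (k : ℤ) = (c : ℤ) - (y : ℤ) := by omega
  have h2T : 2 * (omegaS ς (m : ℤ) (n : ℤ) (a : ℤ) (b : ℤ) (c : ℤ) k y).intDegree =
      -2 * ((a : ℤ) - c) * (((m : ℤ) - n + b - 2 * c + ς.2) - 1) - ((a : ℤ) - c) ^ 2 -
        ((a : ℤ) - c) - 2 * (a : ℤ) * ((b : ℤ) - a - c) -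
        2 * ((c : ℤ) - y) * (2 * (a : ℤ) + 1 - c - y) := by
    rw [hdeg, hdeg1]
    linear_combination hP2 - hQ2 + hB2 + hC2 - hNM +
      (2 * (m : ℤ) - 2 * n - 2 * a + 2 * b - 3 * c - (y : ℤ) + 2 * ς.2 + (k : ℤ) - 3) * hkc
  have hfac1 : 0 ≤ ((a : ℤ) - c) * (((m : ℤ) - n + b - 2 * c + ς.2) - 1) :=
    mul_nonneg (by omega) (by omega)
  have hfac2 : 0 ≤ ((c : ℤ) - y) * (2 * (a : ℤ) + 1 - c - y) :=
    mul_nonneg (by omega) (by omega)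
  refine ⟨hne, ?_, ?_⟩
  · intro hblt
    have hat : (1 : ℤ) ≤ (a : ℤ) * ((b : ℤ) - a - c) := by
      have h0 : (0 : ℤ) < (a : ℤ) * ((b : ℤ) - a - c) :=
        mul_pos (by omega) (by omega)
      omega
    linarith [h2T, hfac1, hfac2, hat, sq_nonneg ((a : ℤ) - c),
      show (0 : ℤ) ≤ (a : ℤ) - c by omega]
  · intro hbeq
    have ht : (b : ℤ) - a - c = 0 := by omega
    have hat0 : (a : ℤ) * ((b : ℤ) - a - c) = 0 := by rw [ht, mul_zero]
    linarith [h2T, hfac1, hfac2, hat0, sq_nonneg ((a : ℤ) - c),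
      show (0 : ℤ) ≤ (a : ℤ) - c by omega]
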